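/- Exchangeability of levels: for all positive integers a, b, c, every vector γ = (γ_1,…,γ_c) of nonnegative integers, and every permutation σ of {1,…,c}: #{π ∈ PP(a,b,c) : (c_1(π),…,c_c(π)) = (γ_1,…,γ_c)} = #{π ∈ PP(a,b,c) : (c_1(π),…,c_c(π)) = (γ_{σ(1)},…,γ_{σ(c)})}. In particular, under the uniform measure on PP(a,b,c), the random variables c_1(π),…,c_c(π) are exchangeable. -/

import Mathlib

open scoped BigOperators

/-- A plane partition: a matrix of naturals (0-indexed) with weakly decreasing rows and
columns and finitely many nonzero entries. -/
structure PlanePartition where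
  entry : ℕ → ℕ → ℕ
  row_decr : ∀ i j, entry i (j + 1) ≤ entry i j
  col_decr : ∀ i j, entry (i + 1) j ≤ entry i j
  finite_support : {p : ℕ × ℕ | entry p.1 p.2 ≠ 0}.Finite

namespace PlanePartition

/-- `π` has at most `b` (nonzero) rows. -/
def rowsLE (π : PlanePartition) (b : ℕ) : Prop := ∀ i j, b ≤ i → π.entry i j = 0

/-- `π` has at most `a` (nonzero) columns. -/
def colsLE (π : PlanePartition) (a : ℕ) : Prop := ∀ i j, a ≤ j → π.entry i j = 0

/-- all entries of `π` are at most `c`. -/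
def entriesLE (π : PlanePartition) (c : ℕ) : Prop := ∀ i j, π.entry i j ≤ c

/-- the number of columns of `π` containing the entry `ℓ`. -/
noncomputable def cCol (π : PlanePartition) (ℓ : ℕ) : ℕ :=
  {j | ∃ i, π.entry i j = ℓ}.ncard

/-- the length of the `i`-th row of `π` (0-indexed); this is the `(i+1)`-st part of
the shape of `π`. -/
noncomputable def rowLen (π : PlanePartition) (i : ℕ) : ℕ :=
  {j | 0 < π.entry i j}.ncard

/-- `d_{iℓ} = #{j : π_{ij} = ℓ > π_{i+1,j}}`; the row index `i` is 0-indexed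
while `ℓ` denotes the actual value. -/
noncomputable def phi (π : PlanePartition) (i ℓ : ℕ) : ℕ :=
  {j | π.entry i j = ℓ ∧ π.entry (i + 1) j < ℓ}.ncard

/-- `Φ(π)` as a 0-indexed matrix: entry `(i, l)` counts `j` with `π_{ij} = l+1 > π_{i+1,j}`. -/
noncomputable def phiMatrix (π : PlanePartition) : ℕ → ℕ → ℕ :=
  fun i l => π.phi i (l + 1)

/-- `π` has shape `μ`. -/
def hasShape (π : PlanePartition) (μ : YoungDiagram) : Prop :=
  ∀ i j, 0 < π.entry i j ↔ (i, j) ∈ μ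

/-- the descent set of `π` (0-indexed positions). -/
def des (π : PlanePartition) : Set (ℕ × ℕ) :=
  {p | π.entry (p.1 + 1) p.2 < π.entry p.1 p.2}

end PlanePartition

/-- the set of plane partitions with at most `a` columns, at most `b` rows
and entries at most `c`. -/
def PP (a b c : ℕ) : Set PlanePartition :=
  {π | π.colsLE a ∧ π.rowsLE b ∧ π.entriesLE c}

/-- `PP(∞, b, c)`: plane partitions with at most `b` rows and entries at most `c`. -/
def PPinf (b c : ℕ) : Set PlanePartition :=
  {π | π.rowsLE b ∧ π.entriesLE c}

/-- a monotone lattice path (as a list of points) from `s` to `t`. -/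
def IsMonPath (L : List (ℕ × ℕ)) (s t : ℕ × ℕ) : Prop :=
  L.head? = some s ∧ L.getLast? = some t ∧
    L.Chain' fun p q => q = (p.1 + 1, p.2) ∨ q = (p.1, p.2 + 1)

/-- the last passage time: the maximal weight of a monotone path from `s` to `t`
in the matrix `d`. -/
noncomputable def lastPassage (d : ℕ → ℕ → ℕ) (s t : ℕ × ℕ) : ℕ :=
  sSup {n | ∃ L, IsMonPath L s t ∧ n = (L.map fun p => d p.1 p.2).sum}

/-- `b×c` matrices of naturals (as functions vanishing off `[0,b) × [0,c)`) whose
last passage time `G(b,c)` is at most `a`. -/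
def BM (a b c : ℕ) : Set (ℕ → ℕ → ℕ) :=
  {d | (∀ i j, b ≤ i → d i j = 0) ∧ (∀ i j, c ≤ j → d i j = 0) ∧
    lastPassage d (0, 0) (b - 1, c - 1) ≤ a}

/-- the rectangular Young diagram of the partition `(a^b)` (with `b` rows of length `a`). -/
def rectDiagram (a b : ℕ) : YoungDiagram where
  cells := Finset.range b ×ˢ Finset.range a
  isLowerSet := by
    intro p q hle hp
    simp only [Finset.coe_product, Set.mem_prod, Finset.mem_coe, Finset.mem_range] at hp ⊢
    exact ⟨lt_of_le_of_lt hle.1 hp.1, lt_of_le_of_lt hle.2 hp.2⟩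

/-- the variables `(1^b, x_1, x_2, …)`: the first `b` variables are specialized to `1`. -/
def oneExtend (b : ℕ) (x : ℕ → ℝ) : ℕ → ℝ :=
  fun i => if i < b then 1 else x (i - b)

/-- the Schur polynomial `s_μ(x_1, …, x_N)` evaluated at real arguments;
variables are 0-indexed (`x ℓ` is the variable `x_{ℓ+1}`), as are tableau entries. -/
noncomputable def schur (μ : YoungDiagram) (N : ℕ) (x : ℕ → ℝ) : ℝ :=
  ∑ᶠ T ∈ {T : SemistandardYoungTableau μ | ∀ i j, (i, j) ∈ μ → T i j < N},
    ∏ p ∈ μ.cells, x (T p.1 p.2)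

/-- the dual symmetric Grothendieck polynomial `g_μ(x_1, …, x_n)` evaluated at real
arguments; variables are 0-indexed (`x ℓ` is the variable `x_{ℓ+1}`). -/
noncomputable def grothG (μ : YoungDiagram) (n : ℕ) (x : ℕ → ℝ) : ℝ :=
  ∑ᶠ π ∈ {π : PlanePartition | π.hasShape μ ∧ π.entriesLE n},
    ∏ ℓ ∈ Finset.range n, x ℓ ^ π.cCol (ℓ + 1)

/-- the elementary symmetric polynomial `e_m(x_1, …, x_n)` evaluated at real arguments. -/
noncomputable def esym (n : ℕ) (x : ℕ → ℝ) (m : ℕ) : ℝ :=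
  ∑ S ∈ (Finset.range n).powersetCard m, ∏ i ∈ S, x i

/-- `e_m` for an integer index `m`, with `e_m = 0` for `m < 0`. -/
noncomputable def esymZ (n : ℕ) (x : ℕ → ℝ) (m : ℤ) : ℝ :=
  if 0 ≤ m then esym n x m.toNat else 0

/-- the weight `∏_{(i,j) ∈ Des(π)} q_{π_{ij}}`; the parameters are 0-indexed
(`q ℓ` is the parameter `q_{ℓ+1}`). -/
noncomputable def desWeight (π : PlanePartition) (q : ℕ → ℝ) : ℝ :=
  ∏ᶠ p ∈ π.des, q (π.entry p.1 p.2 - 1)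

/-- the probability of a configuration `w` of a `b×c` matrix of i.i.d. Geom(q) entries,
where `P(entry = k) = (1-q) qᵏ`. -/
noncomputable def geomWeight (q : ℝ) (b c : ℕ) (w : Fin b × Fin c → ℕ) : ℝ :=
  ∏ p : Fin b × Fin c, ((1 - q) * q ^ w p)

/-- extend a `b×c` matrix to an `ℕ × ℕ`-indexed matrix by zero. -/
def matExt {b c : ℕ} (w : Fin b × Fin c → ℕ) : ℕ → ℕ → ℕ :=
  fun i j => if h : i < b ∧ j < c then w (⟨i, h.1⟩, ⟨j, h.2⟩) else 0

/-!
View `π ∈ PP(a,b,c)` as a stack of `c` layers: `π.height ℓ j` is the number of entries of column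
`j` exceeding `ℓ`. Each layer profile `π.height ℓ` is antitone, consecutive profiles are nested,
and `π` is determined by its profiles. Column `j` contains `ℓ + 1` exactly when the profiles `ℓ`
and `ℓ + 1` differ at `j`, so `c_{ℓ+1}(π)` only depends on these two profiles.

Adjacent transpositions generate the symmetric group, so it suffices to exchange `c_{K+1}` and
`c_{K+2}`. Fix every profile except the `(K+1)`-st. The possible middle profiles `m` are exactly the
antitone sequences squeezed between `w = π.height (K+2)` and `u = π.height K`, and
`(c_{K+1}, c_{K+2}) = (#{j | m j < u j}, #{j | w j < m j})`. This pair of statistics has a symmetric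
joint distribution: its generating polynomial in `ℤ[X, Y]` is invariant under `X ↔ Y`. This is
proved by induction on the number of columns, together with the polynomials in which the first
entry of `m` is capped by `v`, whose failure to be symmetric is tracked by an explicit correction.
-/

open Finset MvPolynomial

theorem IsLowerSet.mem_iff_lt_ncard {s : Set ℕ} (hl : IsLowerSet s) (hs : s.Finite) {i : ℕ} :
    i ∈ s ↔ i < s.ncard := by
  obtain h | ⟨a, rfl⟩ := hl.eq_univ_or_Iio
  · exact absurd (h ▸ hs) Set.infinite_univ
  · simp

theorem ncard_setOf_eq_card_fin {p : ℕ → Prop} [DecidablePred p] {a : ℕ}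
    (h : ∀ j, p j → j < a) : {j | p j}.ncard = #{j : Fin a | p j} := by
  rw [← Set.ncard_coe_finset, ← Set.ncard_image_of_injective _ Fin.val_injective]
  congr 1
  ext j
  simpa using ⟨fun hj => ⟨⟨j, h j hj⟩, hj, rfl⟩, fun ⟨x, hx, e⟩ => e ▸ hx⟩

theorem invariant_comp_perm_of_swap_castSucc_succ {α β : Type*} {n : ℕ}
    (F : (Fin (n + 1) → α) → β)
    (h : ∀ (i : Fin n) γ, F (γ ∘ Equiv.swap i.castSucc i.succ) = F γ)
    (σ : Equiv.Perm (Fin (n + 1))) (γ : Fin (n + 1) → α) : F (γ ∘ σ) = F γ := by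
  have hσ : σ ∈ Submonoid.closure (Set.range fun i : Fin n => Equiv.swap i.castSucc i.succ) :=
    Equiv.Perm.mclosure_swap_castSucc_succ n ▸ Submonoid.mem_top σ
  induction hσ using Submonoid.closure_induction generalizing γ with
  | mem τ hτ =>
    obtain ⟨i, rfl⟩ := hτ
    exact h i γ
  | one => rfl
  | mul τ τ' _ _ hτ hτ' => rw [Equiv.Perm.coe_mul, ← Function.comp_assoc, hτ', hτ]

namespace Fin

variable {n : ℕ} {m : Fin n → ℕ}

theorem antitone_cons_iff {v : ℕ} :
    Antitone (cons v m : Fin (n + 1) → ℕ) ↔ (∀ k, m k ≤ v) ∧ Antitone m := by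
  refine ⟨fun h => ⟨fun k => ?_, fun k k' hk => ?_⟩, fun ⟨hv, hm⟩ i j hij => ?_⟩
  · simpa using h (zero_le k.succ)
  · simpa using h (succ_le_succ_iff.2 hk)
  · cases j using Fin.cases with
    | zero => rw [le_zero_iff.1 hij]
    | succ j =>
      cases i using Fin.cases with
      | zero => simpa using hv j
      | succ i => simpa using hm (succ_le_succ_iff.1 hij)

theorem extend_val_of_lt (m : Fin n → ℕ) {j : ℕ} (hj : j < n) :
    Function.extend val m 0 j = m ⟨j, hj⟩ :=
  val_injective.extend_apply m 0 ⟨j, hj⟩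

theorem extend_val_of_le (m : Fin n → ℕ) {j : ℕ} (hj : n ≤ j) : Function.extend val m 0 j = 0 :=
  Function.extend_apply' _ _ _ fun ⟨k, hk⟩ => by omega

theorem antitone_extend_val (hm : Antitone m) : Antitone (Function.extend val m 0) := by
  intro j j' hj
  by_cases hj' : j' < n
  · rw [extend_val_of_lt m hj', extend_val_of_lt m (hj.trans_lt hj')]
    exact hm hj
  · rw [extend_val_of_le m (not_lt.1 hj')]
    exact Nat.zero_le _

end Fin

theorem coeff_sum_X_pow_mul_X_pow {ι : Type*} (S : Finset ι) (f g : ι → ℕ) (s t : ℕ) :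
    coeff (Finsupp.single 0 s + Finsupp.single 1 t)
        (∑ i ∈ S, X 0 ^ f i * X 1 ^ g i : MvPolynomial (Fin 2) ℤ) =
      #{i ∈ S | f i = s ∧ g i = t} := by
  have hexp : ∀ a b : ℕ, Finsupp.single (0 : Fin 2) a + Finsupp.single 1 b =
      Finsupp.single 0 s + Finsupp.single 1 t ↔ a = s ∧ b = t := fun a b => by
    refine ⟨fun h => ⟨?_, ?_⟩, fun ⟨ha, hb⟩ => ha ▸ hb ▸ rfl⟩
    · simpa using DFunLike.congr_fun h 0
    · simpa using DFunLike.congr_fun h 1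
  simp only [X_pow_eq_monomial, monomial_mul, one_mul, coeff_sum, coeff_monomial, hexp]
  rw [sum_boole]

theorem coeff_rename_swap (p : MvPolynomial (Fin 2) ℤ) (s t : ℕ) :
    coeff (Finsupp.single 0 s + Finsupp.single 1 t) (rename (Equiv.swap 0 1) p) =
      coeff (Finsupp.single 0 t + Finsupp.single 1 s) p := by
  rw [← coeff_rename_mapDomain _ (Equiv.swap (0 : Fin 2) 1).injective p, Finsupp.mapDomain_add,
    Finsupp.mapDomain_single, Finsupp.mapDomain_single, Equiv.swap_apply_left,
    Equiv.swap_apply_right, add_comm]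

section Sandwich

open scoped Classical in
def sandwiches (n : ℕ) (u w : ℕ → ℕ) (cap : ℕ) : Finset (Fin n → ℕ) :=
  {m ∈ Fintype.piFinset fun k => Icc (w k) (min (u k) cap) | Antitone m}

variable {n : ℕ} {u w : ℕ → ℕ} {cap v : ℕ}

def numBelow (u : ℕ → ℕ) (m : Fin n → ℕ) : ℕ := #{k : Fin n | m k < u k}

def numAbove (w : ℕ → ℕ) (m : Fin n → ℕ) : ℕ := #{k : Fin n | w k < m k}

theorem mem_sandwiches {m : Fin n → ℕ} :
    m ∈ sandwiches n u w cap ↔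
      (∀ k : Fin n, w k ≤ m k ∧ m k ≤ u k ∧ m k ≤ cap) ∧ Antitone m := by
  simp [sandwiches]

theorem cons_mem_sandwiches {m : Fin n → ℕ} :
    Fin.cons v m ∈ sandwiches (n + 1) u w cap ↔
      v ∈ Icc (w 0) (min (u 0) cap) ∧ m ∈ sandwiches n (u ∘ Nat.succ) (w ∘ Nat.succ) v := by
  simp only [mem_sandwiches, Fin.forall_fin_succ, Fin.cons_zero, Fin.cons_succ,
    Fin.antitone_cons_iff, mem_Icc, le_min_iff, Fin.val_zero, Fin.val_succ]
  constructor
  · rintro ⟨⟨⟨h1, h2, h3⟩, h4⟩, h5, h6⟩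
    exact ⟨⟨h1, h2, h3⟩, fun k => ⟨(h4 k).1, (h4 k).2.1, h5 k⟩, h6⟩
  · rintro ⟨⟨h1, h2, h3⟩, h4, h6⟩
    exact ⟨⟨⟨h1, h2, h3⟩, fun k => ⟨(h4 k).1, (h4 k).2.1, (h4 k).2.2.trans h3⟩⟩,
      fun k => (h4 k).2.2, h6⟩

theorem numBelow_cons (m : Fin n → ℕ) :
    numBelow u (Fin.cons v m) = (if v < u 0 then 1 else 0) + numBelow (u ∘ Nat.succ) m := by
  simp [numBelow, Fin.card_filter_univ_succ']

theorem numAbove_cons (m : Fin n → ℕ) :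
    numAbove w (Fin.cons v m) = (if w 0 < v then 1 else 0) + numAbove (w ∘ Nat.succ) m := by
  simp [numAbove, Fin.card_filter_univ_succ']

noncomputable def sandwichPoly (n : ℕ) (u w : ℕ → ℕ) (cap : ℕ) : MvPolynomial (Fin 2) ℤ :=
  ∑ m ∈ sandwiches n u w cap, X 0 ^ numBelow u m * X 1 ^ numAbove w m

theorem sandwichPoly_zero : sandwichPoly 0 u w cap = 1 := by
  have : sandwiches 0 u w cap = {Fin.elim0} := by
    ext m
    simp [mem_sandwiches, Subsingleton.elim m Fin.elim0, Subsingleton.antitone]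
  simp [sandwichPoly, this, numBelow, numAbove]

theorem sandwichPoly_succ : sandwichPoly (n + 1) u w cap =
    ∑ v ∈ Icc (w 0) (min (u 0) cap), (if v < u 0 then X 0 else 1) * (if w 0 < v then X 1 else 1) *
      sandwichPoly n (u ∘ Nat.succ) (w ∘ Nat.succ) v := by
  simp_rw [sandwichPoly, mul_sum]
  rw [sum_sigma']
  refine sum_nbij' (fun m => ⟨m 0, Fin.tail m⟩) (fun p => Fin.cons p.1 p.2) (fun m hm => ?_)
    (fun p hp => cons_mem_sandwiches.2 (mem_sigma.1 hp)) (fun m _ => Fin.cons_self_tail m)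
    (fun p _ => by simp) (fun m _ => ?_)
  · rw [← Fin.cons_self_tail m, cons_mem_sandwiches] at hm
    exact mem_sigma.2 hm
  · conv_lhs => rw [← Fin.cons_self_tail m]
    rw [numBelow_cons, numAbove_cons]
    split_ifs <;> ring

theorem sandwichPoly_of_head_le (hu : Antitone u) (h : u 0 ≤ cap) :
    sandwichPoly n u w cap = sandwichPoly n u w (u 0) := by
  have hcap : ∀ k : Fin n, min (u k) cap = min (u k) (u 0) := fun k => by
    rw [min_eq_left ((hu k.val.zero_le).trans h), min_eq_left (hu k.val.zero_le)]
  simp only [sandwichPoly, sandwiches, hcap]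

theorem sandwichPoly_succ_sub (hv : w 0 ≤ v) (hvu : v < u 0) :
    sandwichPoly (n + 1) u w (u 0) - sandwichPoly (n + 1) u w v =
      X 1 * sandwichPoly n (u ∘ Nat.succ) (w ∘ Nat.succ) (u 0) +
        X 0 * X 1 * ∑ v' ∈ Ioo v (u 0), sandwichPoly n (u ∘ Nat.succ) (w ∘ Nat.succ) v' := by
  have hsplit : Icc (w 0) (u 0) = Icc (w 0) v ∪ Ioc v (u 0) := by
    ext
    simp only [mem_union, mem_Icc, mem_Ioc]
    omega
  have hdisj : Disjoint (Icc (w 0) v) (Ioc v (u 0)) :=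
    disjoint_left.2 fun x hx hx' => by simp only [mem_Icc, mem_Ioc] at hx hx'; omega
  have hmid : ∀ v' ∈ Ioo v (u 0), (if v' < u 0 then X 0 else 1) * (if w 0 < v' then X 1 else 1) *
      sandwichPoly n (u ∘ Nat.succ) (w ∘ Nat.succ) v' =
        X 0 * X 1 * sandwichPoly n (u ∘ Nat.succ) (w ∘ Nat.succ) v' := fun v' hv' => by
    rw [mem_Ioo] at hv'
    rw [if_pos hv'.2, if_pos (hv.trans_lt hv'.1)]
  rw [sandwichPoly_succ, sandwichPoly_succ, min_self, min_eq_right hvu.le, hsplit,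
    sum_union hdisj, add_sub_cancel_left, ← Ioo_insert_right hvu, sum_insert (by simp),
    if_neg (lt_irrefl _), if_pos (hv.trans_lt hvu), sum_congr rfl hmid, ← mul_sum]
  ring

theorem sandwichPoly_succ_head (hwu : w 0 < u 0) :
    sandwichPoly (n + 1) u w (w 0) = X 0 * sandwichPoly n (u ∘ Nat.succ) (w ∘ Nat.succ) (w 0) := by
  rw [sandwichPoly_succ, min_eq_right hwu.le, Icc_self, sum_singleton, if_pos hwu,
    if_neg (lt_irrefl _), mul_one]

theorem sandwichPoly_succ_of_head_eq (hwu : w 0 = u 0) :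
    sandwichPoly (n + 1) u w (u 0) = sandwichPoly n (u ∘ Nat.succ) (w ∘ Nat.succ) (u 0) := by
  rw [sandwichPoly_succ, min_self, hwu, Icc_self, sum_singleton, if_neg (lt_irrefl _),
    if_neg (lt_irrefl _), one_mul, one_mul]

-- The correction term of `sandwich_identities`; its recursion is the one forced by
-- `sandwichPoly_succ`.
noncomputable def sandwichDefect : ℕ → (ℕ → ℕ) → (ℕ → ℕ) → ℕ → MvPolynomial (Fin 2) ℤ
  | 0, _, _, _ => 0
  | n + 1, u, w, v =>
    if v < u 0 then
      sandwichPoly n (u ∘ Nat.succ) (w ∘ Nat.succ) (u 0) -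
        X 0 * X 1 * ∑ v' ∈ Ioo v (u 0), sandwichDefect n (u ∘ Nat.succ) (w ∘ Nat.succ) v'
    else 0

theorem sandwichDefect_of_head_le (h : u 0 ≤ v) : sandwichDefect n u w v = 0 := by
  cases n <;> simp [sandwichDefect, not_lt.2 h]

section InductionStep

variable
  (hD : ∀ v, w 1 ≤ v →
    rename (Equiv.swap 0 1) (sandwichPoly n (u ∘ Nat.succ) (w ∘ Nat.succ) v) =
      sandwichPoly n (u ∘ Nat.succ) (w ∘ Nat.succ) v +
        (X 1 - X 0) * sandwichDefect n (u ∘ Nat.succ) (w ∘ Nat.succ) v)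
  (hE : ∀ v, w 1 ≤ v →
    sandwichPoly n (u ∘ Nat.succ) (w ∘ Nat.succ) (u 0) -
        sandwichPoly n (u ∘ Nat.succ) (w ∘ Nat.succ) v =
      X 1 * sandwichDefect n (u ∘ Nat.succ) (w ∘ Nat.succ) v +
        X 0 * X 1 * ∑ v' ∈ Ioo v (u 0), sandwichDefect n (u ∘ Nat.succ) (w ∘ Nat.succ) v')
  (hG : sandwichDefect n (u ∘ Nat.succ) (w ∘ Nat.succ) (u 0) = 0)

include hD in
theorem rename_swap_sum_sandwichPoly {a b : ℕ} (ha : w 1 ≤ a) :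
    rename (Equiv.swap 0 1) (∑ v' ∈ Ioo a b, sandwichPoly n (u ∘ Nat.succ) (w ∘ Nat.succ) v') =
      ∑ v' ∈ Ioo a b, sandwichPoly n (u ∘ Nat.succ) (w ∘ Nat.succ) v' +
        (X 1 - X 0) * ∑ v' ∈ Ioo a b, sandwichDefect n (u ∘ Nat.succ) (w ∘ Nat.succ) v' := by
  rw [map_sum, mul_sum, ← sum_add_distrib]
  exact sum_congr rfl fun v' hv' => hD v' (ha.trans (mem_Ioo.1 hv').1.le)

include hD hE hG in
theorem rename_swap_sandwichPoly_succ (hw : Antitone w) (hwu : w ≤ u) :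
    rename (Equiv.swap 0 1) (sandwichPoly (n + 1) u w (u 0)) = sandwichPoly (n + 1) u w (u 0) := by
  have hw1 : w 1 ≤ w 0 := hw (Nat.zero_le 1)
  rcases (hwu 0).eq_or_lt with h | h
  · rw [sandwichPoly_succ_of_head_eq h, hD _ (hw1.trans (hwu 0)), hG, mul_zero, add_zero]
  · have hP := sandwichPoly_succ_sub (n := n) le_rfl h
    rw [sandwichPoly_succ_head h, sub_eq_iff_eq_add'] at hP
    rw [hP]
    simp only [map_add, map_mul, rename_X, Equiv.swap_apply_left, Equiv.swap_apply_right]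
    rw [rename_swap_sum_sandwichPoly hD hw1, hD (w 0) hw1, hD _ (hw1.trans (hwu 0)), hG]
    linear_combination (X 0 - X 1) * hE (w 0) hw1

include hD hE hG in
theorem sandwich_identities_succ_of_lt (hw : Antitone w)
    (hS : rename (Equiv.swap 0 1) (sandwichPoly (n + 1) u w (u 0)) =
      sandwichPoly (n + 1) u w (u 0))
    (hv : w 0 ≤ v) (hvu : v < u 0) :
    rename (Equiv.swap 0 1) (sandwichPoly (n + 1) u w v) =
        sandwichPoly (n + 1) u w v + (X 1 - X 0) * sandwichDefect (n + 1) u w v ∧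
      sandwichPoly (n + 1) u w (u 0) - sandwichPoly (n + 1) u w v =
        X 1 * sandwichDefect (n + 1) u w v +
          X 0 * X 1 * ∑ v' ∈ Ioo v (u 0), sandwichDefect (n + 1) u w v' := by
  have hv1 : w 1 ≤ v := (hw (Nat.zero_le 1)).trans hv
  have hdef : ∀ v' < u 0, sandwichDefect (n + 1) u w v' =
      sandwichPoly n (u ∘ Nat.succ) (w ∘ Nat.succ) (u 0) -
        X 0 * X 1 * ∑ v'' ∈ Ioo v' (u 0), sandwichDefect n (u ∘ Nat.succ) (w ∘ Nat.succ) v'' :=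
    fun v' hv' => by simp [sandwichDefect, hv']
  have hsub := sandwichPoly_succ_sub (n := n) hv hvu
  refine ⟨?_, ?_⟩
  · have hswap := congrArg (rename (Equiv.swap 0 1)) hsub
    simp only [map_sub, map_add, map_mul, rename_X, Equiv.swap_apply_left,
      Equiv.swap_apply_right] at hswap
    rw [hS, rename_swap_sum_sandwichPoly hD hv1, hD _ (hv1.trans hvu.le), hG] at hswap
    rw [hdef v hvu]
    linear_combination hsub - hswap
  · have hC : ∀ v' ∈ Ioo v (u 0), sandwichPoly n (u ∘ Nat.succ) (w ∘ Nat.succ) v' =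
        sandwichPoly n (u ∘ Nat.succ) (w ∘ Nat.succ) (u 0) -
          X 1 * sandwichDefect n (u ∘ Nat.succ) (w ∘ Nat.succ) v' -
          X 0 * X 1 * ∑ v'' ∈ Ioo v' (u 0), sandwichDefect n (u ∘ Nat.succ) (w ∘ Nat.succ) v'' :=
      fun v' hv' => by linear_combination -hE v' (hv1.trans (mem_Ioo.1 hv').1.le)
    rw [hsub, hdef v hvu, sum_congr rfl fun v' hv' => hdef v' (mem_Ioo.1 hv').2,
      sum_congr rfl hC]
    simp only [sum_sub_distrib, ← mul_sum]
    ring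

end InductionStep

theorem sandwich_identities (hu : Antitone u) (hw : Antitone w) (hwu : w ≤ u) (hv : w 0 ≤ v) :
    rename (Equiv.swap 0 1) (sandwichPoly n u w v) =
        sandwichPoly n u w v + (X 1 - X 0) * sandwichDefect n u w v ∧
      sandwichPoly n u w (u 0) - sandwichPoly n u w v =
        X 1 * sandwichDefect n u w v +
          X 0 * X 1 * ∑ v' ∈ Ioo v (u 0), sandwichDefect n u w v' := by
  induction n generalizing u w v with
  | zero => simp [sandwichPoly_zero, sandwichDefect]
  | succ n ih =>
    have hsucc : Monotone Nat.succ := fun _ _ => Nat.succ_le_succ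
    have hu1 : u 1 ≤ u 0 := hu (Nat.zero_le 1)
    have ih' := fun {v} (hv : w 1 ≤ v) =>
      ih (hu.comp_monotone hsucc) (hw.comp_monotone hsucc) (fun k => hwu _) hv
    have hG : sandwichDefect n (u ∘ Nat.succ) (w ∘ Nat.succ) (u 0) = 0 :=
      sandwichDefect_of_head_le hu1
    have hE : ∀ v, w 1 ≤ v → sandwichPoly n (u ∘ Nat.succ) (w ∘ Nat.succ) (u 0) -
        sandwichPoly n (u ∘ Nat.succ) (w ∘ Nat.succ) v =
          X 1 * sandwichDefect n (u ∘ Nat.succ) (w ∘ Nat.succ) v +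
          X 0 * X 1 * ∑ v' ∈ Ioo v (u 0), sandwichDefect n (u ∘ Nat.succ) (w ∘ Nat.succ) v' := by
      intro v hv
      rw [sandwichPoly_of_head_le (hu.comp_monotone hsucc) hu1, (ih' hv).2]
      congr 2
      refine sum_subset (Ioo_subset_Ioo_right hu1) fun v' hv' hv'' => sandwichDefect_of_head_le ?_
      simp only [mem_Ioo, not_and, not_lt] at hv' hv''
      exact hv'' hv'.1
    have hS := rename_swap_sandwichPoly_succ (fun v hv => (ih' hv).1) hE hG hw hwu
    rcases lt_or_ge v (u 0) with hvu | huv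
    · exact sandwich_identities_succ_of_lt (fun v hv => (ih' hv).1) hE hG hw hS hv hvu
    · rw [sandwichPoly_of_head_le hu huv, sandwichDefect_of_head_le huv,
        Ioo_eq_empty (not_lt.2 huv)]
      simp [hS]

theorem rename_swap_sandwichPoly (hu : Antitone u) (hw : Antitone w) (hwu : w ≤ u) :
    rename (Equiv.swap 0 1) (sandwichPoly n u w (u 0)) = sandwichPoly n u w (u 0) := by
  simpa [sandwichDefect_of_head_le le_rfl] using (sandwich_identities hu hw hwu (hwu 0)).1

theorem card_sandwiches_comm (hu : Antitone u) (hw : Antitone w) (hwu : w ≤ u) (s t : ℕ) :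
    #{m ∈ sandwiches n u w (u 0) | numBelow u m = s ∧ numAbove w m = t} =
      #{m ∈ sandwiches n u w (u 0) | numBelow u m = t ∧ numAbove w m = s} := by
  have h := congrArg (coeff (Finsupp.single 0 s + Finsupp.single 1 t))
    (rename_swap_sandwichPoly (n := n) hu hw hwu)
  rw [coeff_rename_swap, sandwichPoly, coeff_sum_X_pow_mul_X_pow,
    coeff_sum_X_pow_mul_X_pow] at h
  exact_mod_cast h.symm

end Sandwich

namespace PlanePartition

theorem ext_entry {π π' : PlanePartition} (h : π.entry = π'.entry) : π = π' := by
  cases π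
  cases π'
  congr

variable {a b c K : ℕ} {π π' π0 : PlanePartition}

variable (π) in
theorem antitone_entry_left (j : ℕ) : Antitone (π.entry · j) :=
  antitone_nat_of_succ_le fun i => π.col_decr i j

variable (π) in
theorem antitone_entry_right (i : ℕ) : Antitone (π.entry i) :=
  antitone_nat_of_succ_le (π.row_decr i)

noncomputable def height (π : PlanePartition) (ℓ j : ℕ) : ℕ := {i | ℓ < π.entry i j}.ncard

theorem lt_height_iff {ℓ i j : ℕ} : i < π.height ℓ j ↔ ℓ < π.entry i j := by
  refine (IsLowerSet.mem_iff_lt_ncard (fun i i' hi' hi => ?_) ?_).symm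
  · exact hi.trans_le (π.antitone_entry_left j hi')
  · refine (π.finite_support.image Prod.fst).subset fun i hi => ⟨(i, j), ?_, rfl⟩
    exact Nat.ne_zero_of_lt hi

theorem height_eq_zero_iff {ℓ j : ℕ} : π.height ℓ j = 0 ↔ π.entry 0 j ≤ ℓ := by
  rw [← not_lt, ← lt_height_iff, Nat.pos_iff_ne_zero, not_not]

variable (π) in
theorem antitone_height_left (j : ℕ) : Antitone (π.height · j) := fun _ _ hℓ =>
  le_of_forall_lt fun _ hi => lt_height_iff.2 (hℓ.trans_lt (lt_height_iff.1 hi))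

variable (π) in
theorem antitone_height_right (ℓ : ℕ) : Antitone (π.height ℓ) := fun _ _ hj =>
  le_of_forall_lt fun _ hi =>
    lt_height_iff.2 ((lt_height_iff.1 hi).trans_le (π.antitone_entry_right _ hj))

theorem height_eq_zero_of_colsLE (hπ : π.colsLE a) (ℓ : ℕ) {j : ℕ} (hj : a ≤ j) :
    π.height ℓ j = 0 :=
  height_eq_zero_iff.2 ((hπ 0 j hj).trans_le ℓ.zero_le)

theorem height_eq_zero_of_entriesLE (hπ : π.entriesLE c) {ℓ : ℕ} (hℓ : c ≤ ℓ) (j : ℕ) :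
    π.height ℓ j = 0 :=
  height_eq_zero_iff.2 ((hπ 0 j).trans hℓ)

theorem height_le_of_rowsLE (hπ : π.rowsLE b) (ℓ j : ℕ) : π.height ℓ j ≤ b :=
  le_of_forall_lt fun i hi => lt_of_not_ge fun hib => by
    simpa [hπ i j hib] using lt_height_iff.1 hi

theorem ext_height (h : π.height = π'.height) : π = π' :=
  ext_entry <| funext₂ fun i j => eq_of_forall_lt_iff fun ℓ => by
    rw [← lt_height_iff, ← lt_height_iff, h]

theorem cCol_succ (ℓ : ℕ) :
    π.cCol (ℓ + 1) = {j | π.height (ℓ + 1) j < π.height ℓ j}.ncard := by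
  refine congrArg Set.ncard (Set.ext fun j => ⟨fun ⟨i, hi⟩ => ?_, fun h => ?_⟩)
  · have h1 : i < π.height ℓ j := lt_height_iff.2 (by omega)
    have h2 : ¬ i < π.height (ℓ + 1) j := by rw [lt_height_iff]; omega
    exact lt_of_not_ge fun h => h2 (h1.trans_le h)
  · refine ⟨π.height (ℓ + 1) j, ?_⟩
    have h1 := lt_height_iff.1 h
    have h2 := (lt_height_iff (π := π)).not.1 (lt_irrefl (π.height (ℓ + 1) j))
    omega

theorem cCol_succ_eq_card (hπ : π.colsLE a) (ℓ : ℕ) :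
    π.cCol (ℓ + 1) = #{j : Fin a | π.height (ℓ + 1) j < π.height ℓ j} := by
  rw [cCol_succ, ncard_setOf_eq_card_fin fun j hj => lt_of_not_ge fun hja => ?_]
  rw [height_eq_zero_of_colsLE hπ ℓ hja] at hj
  exact Nat.not_lt_zero _ hj

section OfHeights

variable (c : ℕ) (G : ℕ → ℕ → ℕ) (hG : ∀ ℓ, Antitone (G ℓ)) (hb : ∀ ℓ j, G ℓ j ≤ b)
  (ha : ∀ ℓ j, a ≤ j → G ℓ j = 0)

def ofHeights : PlanePartition where
  entry i j := #{ℓ ∈ range c | i < G ℓ j}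
  row_decr i j := card_le_card <| monotone_filter_right _ fun ℓ _ h => h.trans_le (hG ℓ j.le_succ)
  col_decr i j := card_le_card <| monotone_filter_right _ fun ℓ _ h => (Nat.lt_succ_self i).trans h
  finite_support := by
    refine ((Set.finite_Iio b).prod (Set.finite_Iio a)).subset fun ⟨i, j⟩ hp => ?_
    obtain ⟨ℓ, hℓ⟩ := card_ne_zero.1 hp
    have hi : i < G ℓ j := (mem_filter.1 hℓ).2
    exact ⟨hi.trans_le (hb ℓ j), show j < a from lt_of_not_ge fun hj => by simp [ha ℓ j hj] at hi⟩

theorem ofHeights_mem_PP : ofHeights c G hG hb ha ∈ PP a b c := by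
  refine ⟨fun i j hj => ?_, fun i j hi => ?_,
    fun i j => (card_filter_le _ _).trans (card_range c).le⟩
  · simp [ofHeights, ha _ j hj]
  · refine card_eq_zero.2 <| filter_false_of_mem (s := range c) fun ℓ _ (h : i < G ℓ j) => ?_
    exact absurd (h.trans_le (hb ℓ j)) (not_lt.2 hi)

theorem height_ofHeights (hnest : ∀ ℓ j, G (ℓ + 1) j ≤ G ℓ j) (hc : ∀ ℓ j, c ≤ ℓ → G ℓ j = 0) :
    (ofHeights c G hG hb ha).height = G := by
  funext ℓ j
  refine eq_of_forall_lt_iff fun i => ?_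
  have hl : IsLowerSet (({ℓ ∈ range c | i < G ℓ j} : Finset ℕ) : Set ℕ) := fun ℓ ℓ' hℓ' hℓ => by
    simp only [coe_filter, mem_range, Set.mem_ofPred_eq] at hℓ ⊢
    exact ⟨hℓ'.trans_lt hℓ.1,
      hℓ.2.trans_le (antitone_nat_of_succ_le (f := (G · j)) (hnest · j) hℓ')⟩
  rw [lt_height_iff, show (ofHeights c G hG hb ha).entry i j = #{ℓ ∈ range c | i < G ℓ j} from rfl,
    ← Set.ncard_coe_finset, ← hl.mem_iff_lt_ncard (finite_toSet _), mem_coe, mem_filter, mem_range]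
  exact ⟨And.right, fun h => ⟨lt_of_not_ge fun hℓ => by simp [hc ℓ j hℓ] at h, h⟩⟩

end OfHeights

theorem exists_height_eq_update (hK : K + 1 < c) (hπ0 : π0 ∈ PP a b c) {e : ℕ → ℕ}
    (he : Antitone e) (hbd : ∀ j, π0.height (K + 2) j ≤ e j ∧ e j ≤ π0.height K j) :
    ∃ π ∈ PP a b c, π.height = Function.update π0.height (K + 1) e := by
  obtain ⟨hcols, hrows, hent⟩ := hπ0
  set G := Function.update π0.height (K + 1) e
  have hG : ∀ ℓ, Antitone (G ℓ) := fun ℓ => by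
    simp only [G, Function.update_apply]
    split_ifs
    exacts [he, π0.antitone_height_right ℓ]
  have hb : ∀ ℓ j, G ℓ j ≤ b := fun ℓ j => by
    simp only [G, Function.update_apply]
    split_ifs
    exacts [(hbd j).2.trans (height_le_of_rowsLE hrows K j), height_le_of_rowsLE hrows ℓ j]
  have ha : ∀ ℓ j, a ≤ j → G ℓ j = 0 := fun ℓ j hj => by
    simp only [G, Function.update_apply]
    split_ifs
    exacts [Nat.eq_zero_of_le_zero ((hbd j).2.trans (height_eq_zero_of_colsLE hcols K hj).le),
      height_eq_zero_of_colsLE hcols ℓ hj]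
  have hnest : ∀ ℓ j, G (ℓ + 1) j ≤ G ℓ j := fun ℓ j => by
    simp only [G, Function.update_apply]
    split_ifs with h1 h2 h2
    · omega
    · obtain rfl : ℓ = K := by omega
      exact (hbd j).2
    · subst h2
      exact (hbd j).1
    · exact π0.antitone_height_left j (Nat.le_succ ℓ)
  have hc : ∀ ℓ j, c ≤ ℓ → G ℓ j = 0 := fun ℓ j hℓ => by
    simp only [G, Function.update_apply, if_neg (show ℓ ≠ K + 1 by omega)]
    exact height_eq_zero_of_entriesLE hent hℓ j
  exact ⟨ofHeights c G hG hb ha, ofHeights_mem_PP c G hG hb ha,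
    height_ofHeights c G hG hb ha hnest hc⟩

noncomputable def frame (K : ℕ) (π : PlanePartition) : ℕ → ℕ → ℕ :=
  Function.update π.height (K + 1) 0

theorem height_eq_of_frame_eq (h : frame K π = frame K π') {ℓ : ℕ} (hℓ : ℓ ≠ K + 1) :
    π.height ℓ = π'.height ℓ := by
  simpa [frame, Function.update_of_ne hℓ] using congrFun h ℓ

theorem cCol_succ_eq_of_frame_eq (h : frame K π = frame K π') {ℓ : ℕ} (hℓ : ℓ ≠ K)
    (hℓ' : ℓ ≠ K + 1) : π.cCol (ℓ + 1) = π'.cCol (ℓ + 1) := by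
  rw [cCol_succ, cCol_succ, height_eq_of_frame_eq h hℓ', height_eq_of_frame_eq h (by omega)]

section Fiber

variable (hπ : π ∈ PP a b c) (hfr : frame K π = frame K π0)
include hfr

theorem middle_mem_sandwiches :
    (fun j : Fin a => π.height (K + 1) j) ∈
      sandwiches a (π0.height K) (π0.height (K + 2)) (π0.height K 0) := by
  rw [← height_eq_of_frame_eq hfr (ℓ := K) (by omega),
    ← height_eq_of_frame_eq hfr (ℓ := K + 2) (by omega)]
  refine mem_sandwiches.2 ⟨fun j => ⟨?_, ?_, ?_⟩, ?_⟩
  · exact π.antitone_height_left j (Nat.le_succ _)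
  · exact π.antitone_height_left j (Nat.le_succ _)
  · exact (π.antitone_height_left j (Nat.le_succ _)).trans (π.antitone_height_right K j.val.zero_le)
  · exact (π.antitone_height_right (K + 1)).comp_monotone Fin.val_strictMono.monotone

include hπ in
theorem cCol_eq_numBelow :
    π.cCol (K + 1) = numBelow (π0.height K) (fun j : Fin a => π.height (K + 1) j) := by
  rw [cCol_succ_eq_card hπ.1, numBelow, height_eq_of_frame_eq hfr (ℓ := K) (by omega)]

include hπ in
theorem cCol_eq_numAbove :
    π.cCol (K + 2) = numAbove (π0.height (K + 2)) (fun j : Fin a => π.height (K + 1) j) := by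
  rw [cCol_succ_eq_card hπ.1 (K + 1), numAbove, show K + 1 + 1 = K + 2 from rfl,
    height_eq_of_frame_eq hfr (ℓ := K + 2) (by omega)]

end Fiber

theorem exists_frame_eq_middle_eq (hK : K + 1 < c) (hπ0 : π0 ∈ PP a b c) {m : Fin a → ℕ}
    (hm : m ∈ sandwiches a (π0.height K) (π0.height (K + 2)) (π0.height K 0)) :
    ∃ π ∈ PP a b c, frame K π = frame K π0 ∧ (fun j : Fin a => π.height (K + 1) j) = m := by
  obtain ⟨hbd, hanti⟩ := mem_sandwiches.1 hm
  have he : ∀ j, π0.height (K + 2) j ≤ Function.extend Fin.val m 0 j ∧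
      Function.extend Fin.val m 0 j ≤ π0.height K j := fun j => by
    by_cases hj : j < a
    · rw [Fin.extend_val_of_lt m hj]
      exact ⟨(hbd ⟨j, hj⟩).1, (hbd ⟨j, hj⟩).2.1⟩
    · rw [Fin.extend_val_of_le m (not_lt.1 hj), height_eq_zero_of_colsLE hπ0.1 _ (not_lt.1 hj)]
      exact ⟨le_rfl, Nat.zero_le _⟩
  obtain ⟨π, hπ, hheight⟩ := exists_height_eq_update hK hπ0 (Fin.antitone_extend_val hanti) he
  refine ⟨π, hπ, by rw [frame, frame, hheight, Function.update_idem], funext fun j => ?_⟩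
  rw [hheight, Function.update_self, Fin.extend_val_of_lt m j.2]

theorem eq_of_frame_eq_of_middle_eq (hπ : π ∈ PP a b c) (hπ' : π' ∈ PP a b c)
    (hfr : frame K π = frame K π')
    (hmid : (fun j : Fin a => π.height (K + 1) j) = fun j : Fin a => π'.height (K + 1) j) :
    π = π' := by
  refine ext_height (funext fun ℓ => ?_)
  by_cases hℓ : ℓ = K + 1
  · subst hℓ
    funext j
    by_cases hj : j < a
    · exact congrFun hmid ⟨j, hj⟩
    · rw [height_eq_zero_of_colsLE hπ.1 _ (not_lt.1 hj),
        height_eq_zero_of_colsLE hπ'.1 _ (not_lt.1 hj)]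
  · exact height_eq_of_frame_eq hfr hℓ

end PlanePartition

theorem finite_PP (a b c : ℕ) : (PP a b c).Finite := by
  refine Set.Finite.of_finite_image
    (f := fun π (p : Fin b × Fin a) => Fin.ofNat (c + 1) (π.entry p.1 p.2)) (Set.toFinite _)
    fun π hπ π' hπ' h => PlanePartition.ext_entry (funext₂ fun i j => ?_)
  by_cases hij : i < b ∧ j < a
  · have := congrArg Fin.val (congrFun h (⟨i, hij.1⟩, ⟨j, hij.2⟩))
    simpa [Fin.val_ofNat, Nat.mod_eq_of_lt (Nat.lt_succ_of_le (hπ.2.2 i j)),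
      Nat.mod_eq_of_lt (Nat.lt_succ_of_le (hπ'.2.2 i j))] using this
  · rcases not_and_or.1 hij with hi | hj
    · rw [hπ.2.1 i j (not_lt.1 hi), hπ'.2.1 i j (not_lt.1 hi)]
    · rw [hπ.1 i j (not_lt.1 hj), hπ'.1 i j (not_lt.1 hj)]

namespace PlanePartition

variable {a b c K : ℕ} {π π0 : PlanePartition}

open scoped Classical in
theorem card_frame_fiber (hK : K + 1 < c) (hπ0 : π0 ∈ PP a b c) (s t : ℕ) :
    #{π ∈ (finite_PP a b c).toFinset |
        frame K π = frame K π0 ∧ π.cCol (K + 1) = s ∧ π.cCol (K + 2) = t} =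
      #{m ∈ sandwiches a (π0.height K) (π0.height (K + 2)) (π0.height K 0) |
        numBelow (π0.height K) m = s ∧ numAbove (π0.height (K + 2)) m = t} := by
  refine card_nbij (fun π j => π.height (K + 1) j) (fun π hπ => ?_) (fun π hπ π' hπ' h => ?_)
    (fun m hm => ?_)
  · simp only [coe_filter, Set.Finite.mem_toFinset, Set.mem_ofPred_eq] at hπ ⊢
    obtain ⟨hπ, hfr, hs, ht⟩ := hπ
    exact ⟨middle_mem_sandwiches hfr, (cCol_eq_numBelow hπ hfr).symm.trans hs,
      (cCol_eq_numAbove hπ hfr).symm.trans ht⟩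
  · simp only [coe_filter, Set.Finite.mem_toFinset, Set.mem_ofPred_eq] at hπ hπ'
    exact eq_of_frame_eq_of_middle_eq hπ.1 hπ'.1 (hπ.2.1.trans hπ'.2.1.symm) h
  · simp only [coe_filter, Set.mem_ofPred_eq] at hm
    obtain ⟨π, hπ, hfr, rfl⟩ := exists_frame_eq_middle_eq hK hπ0 hm.1
    refine ⟨π, ?_, rfl⟩
    simp only [coe_filter, Set.Finite.mem_toFinset, Set.mem_ofPred_eq]
    exact ⟨hπ, hfr, (cCol_eq_numBelow hπ hfr).trans hm.2.1, (cCol_eq_numAbove hπ hfr).trans hm.2.2⟩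

theorem forall_cCol_eq_iff {n : ℕ} {i : Fin n} (hfr : frame i π = frame i π0)
    (δ : Fin (n + 1) → ℕ) :
    (∀ l : Fin (n + 1), π.cCol (l + 1) = δ l) ↔
      (∀ l : Fin (n + 1), l ≠ i.castSucc → l ≠ i.succ → π0.cCol (l + 1) = δ l) ∧
        π.cCol (i + 1) = δ i.castSucc ∧ π.cCol (i + 2) = δ i.succ := by
  refine ⟨fun h => ⟨fun l h1 h2 => ?_, h i.castSucc, h i.succ⟩, fun ⟨hoff, h1, h2⟩ l => ?_⟩
  · rw [← cCol_succ_eq_of_frame_eq hfr (fun e => h1 (Fin.ext e)) (fun e => h2 (Fin.ext e))]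
    exact h l
  · by_cases hl1 : l = i.castSucc
    · exact hl1 ▸ h1
    by_cases hl2 : l = i.succ
    · exact hl2 ▸ h2
    rw [cCol_succ_eq_of_frame_eq hfr (fun e => hl1 (Fin.ext e)) (fun e => hl2 (Fin.ext e))]
    exact hoff l hl1 hl2

open scoped Classical in
theorem card_levels_frame_fiber {n : ℕ} (i : Fin n) (hπ0 : π0 ∈ PP a b (n + 1)) (δ : Fin (n + 1) → ℕ) :
    #{π ∈ {π ∈ (finite_PP a b (n + 1)).toFinset | ∀ l : Fin (n + 1), π.cCol (l + 1) = δ l} |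
        frame i π = frame i π0} =
      if ∀ l : Fin (n + 1), l ≠ i.castSucc → l ≠ i.succ → π0.cCol (l + 1) = δ l then
        #{m ∈ sandwiches a (π0.height i) (π0.height (i + 2)) (π0.height i 0) |
          numBelow (π0.height i) m = δ i.castSucc ∧ numAbove (π0.height (i + 2)) m = δ i.succ}
      else 0 := by
  rw [filter_filter]
  split_ifs with hoff
  · rw [← card_frame_fiber (by omega) hπ0]
    congr 1
    refine filter_congr fun π _ => ?_
    rw [and_comm]
    exact and_congr_right fun hfr => (forall_cCol_eq_iff hfr δ).trans (and_iff_right hoff)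
  · refine card_eq_zero.2 (filter_eq_empty_iff.2 fun π _ ⟨hδ, hfr⟩ => ?_)
    exact hoff ((forall_cCol_eq_iff hfr δ).1 hδ).1

end PlanePartition

noncomputable def countByLevels (a b c : ℕ) (γ : Fin c → ℕ) : ℕ :=
  {π ∈ PP a b c | ∀ l : Fin c, π.cCol (l + 1) = γ l}.ncard

open scoped Classical in
theorem countByLevels_eq_card (a b c : ℕ) (γ : Fin c → ℕ) :
    countByLevels a b c γ =
      #{π ∈ (finite_PP a b c).toFinset | ∀ l : Fin c, π.cCol (l + 1) = γ l} := by
  rw [countByLevels, ← Set.ncard_coe_finset, coe_filter]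
  simp

theorem countByLevels_comp_swap (a b : ℕ) {n : ℕ} (i : Fin n) (γ : Fin (n + 1) → ℕ) :
    countByLevels a b (n + 1) (γ ∘ Equiv.swap i.castSucc i.succ) =
      countByLevels a b (n + 1) γ := by
  classical
  have hfib : ∀ δ : Fin (n + 1) → ℕ, ∀ π ∈ {π ∈ (finite_PP a b (n + 1)).toFinset |
      ∀ l : Fin (n + 1), π.cCol (l + 1) = δ l},
      PlanePartition.frame i π ∈ (finite_PP a b (n + 1)).toFinset.image (PlanePartition.frame i) :=
    fun δ π hπ => mem_image_of_mem _ (mem_filter.1 hπ).1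
  rw [countByLevels_eq_card, countByLevels_eq_card, card_eq_sum_card_fiberwise (hfib _),
    card_eq_sum_card_fiberwise (hfib _)]
  refine sum_congr rfl fun f hf => ?_
  obtain ⟨π0, hπ0, rfl⟩ := mem_image.1 hf
  rw [Set.Finite.mem_toFinset] at hπ0
  rw [PlanePartition.card_levels_frame_fiber i hπ0, PlanePartition.card_levels_frame_fiber i hπ0]
  have hoff : (∀ l, l ≠ i.castSucc → l ≠ i.succ →
      π0.cCol (l + 1) = γ (Equiv.swap i.castSucc i.succ l)) ↔
      ∀ l, l ≠ i.castSucc → l ≠ i.succ → π0.cCol (l + 1) = γ l :=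
    forall_congr' fun l => imp_congr_right fun h1 => imp_congr_right fun h2 => by
      rw [Equiv.swap_apply_of_ne_of_ne h1 h2]
  simp only [Function.comp_apply, Equiv.swap_apply_left, Equiv.swap_apply_right, hoff]
  split_ifs
  · exact card_sandwiches_comm (π0.antitone_height_right _) (π0.antitone_height_right _)
      (fun j => π0.antitone_height_left j (by omega)) _ _
  · rfl

theorem countByLevels_comp_perm (a b : ℕ) {c : ℕ} (σ : Equiv.Perm (Fin c)) (γ : Fin c → ℕ) :
    countByLevels a b c (γ ∘ σ) = countByLevels a b c γ := by
  cases c with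
  | zero => rw [Subsingleton.elim (γ ∘ σ) γ]
  | succ n =>
    exact invariant_comp_perm_of_swap_castSucc_succ _ (countByLevels_comp_swap a b) σ γ

theorem corners_exchangeable_general (a b c : ℕ)
    (γ : Fin c → ℕ) (σ : Equiv.Perm (Fin c)) :
    {π ∈ PP a b c | ∀ l : Fin c, π.cCol ((l : ℕ) + 1) = γ l}.ncard
      = {π ∈ PP a b c | ∀ l : Fin c, π.cCol ((l : ℕ) + 1) = γ (σ l)}.ncard :=
  (countByLevels_comp_perm a b σ γ).symm

/-- Exchangeability of levels: for every `γ ∈ ℕ^c` and every permutation `σ`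
of `{1,…,c}`, the number of `π ∈ PP(a,b,c)` with `(c_1(π),…,c_c(π)) = γ` equals the number
with `(c_1(π),…,c_c(π)) = γ ∘ σ`. -/
theorem corners_exchangeable (a b c : ℕ) (ha : 0 < a) (hb : 0 < b) (hc : 0 < c)
    (γ : Fin c → ℕ) (σ : Equiv.Perm (Fin c)) :
    {π ∈ PP a b c | ∀ l : Fin c, π.cCol ((l : ℕ) + 1) = γ l}.ncard
      = {π ∈ PP a b c | ∀ l : Fin c, π.cCol ((l : ℕ) + 1) = γ (σ l)}.ncard :=
  corners_exchangeable_general a b c γ σ
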